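/- The unilateral weighted shift W with weights w_{2n} = 1 and w_{2n+1} = 1/(n+1) for all n ≥ 0 is not posinormal (since sup_n |wₙ/w_{n+1}| = ∞) and is not coposinormal (since e₀ ∈ ker W* but W e₀ ≠ 0), yet W is supraposinormal. -/

import Mathlib

/-!
A weighted shift `W` has diagonal `W*W = diag(|wₙ|²)` and `WW* = diag(0, |w₀|², |w₁|², …)`, so
these commute. For any injective `A` with `A*A` and `AA*` commuting, `Q = A*(A*A)²A` and
`P = A(AA*)²A*` are positive, `Q` is injective and self-adjoint hence has dense range, and
`AQA* = (AA*)(A*A)²(AA*) = (A*A)(AA*)²(A*A) = A*PA`.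

Testing posinormality on `e_{2m+1}` gives `1 = |w_{2m}|² ≤ γ²|w_{2m+1}|² = γ²/(m+1)²` for every `m`,
and testing coposinormality on `e₀` gives `|w₀|² ≤ γ²‖W*e₀‖² = 0`.
-/

open ContinuousLinearMap
open scoped lp

section Binormal

variable {𝕜 E F : Type*} [RCLike 𝕜] [NormedAddCommGroup E] [InnerProductSpace 𝕜 E]
  [CompleteSpace E] [NormedAddCommGroup F] [InnerProductSpace 𝕜 F] [CompleteSpace F]

theorem ContinuousLinearMap.IsPositive.norm_sq_le {A B : E →L[𝕜] F} {γ : ℝ}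
    (h : ((γ : 𝕜) ^ 2 • (adjoint A ∘L A) - adjoint B ∘L B).IsPositive) (x : E) :
    ‖B x‖ ^ 2 ≤ γ ^ 2 * ‖A x‖ ^ 2 := by
  have hre := h.re_inner_nonneg_left x
  simp only [sub_apply, smul_apply, comp_apply, inner_sub_left, inner_smul_left,
    adjoint_inner_left, inner_self_eq_norm_sq_to_K, map_sub] at hre
  norm_cast at hre
  simpa using hre

theorem IsSelfAdjoint.denseRange_of_injective {T : E →L[𝕜] E} (hT : IsSelfAdjoint T)
    (hinj : Function.Injective T) : DenseRange T := by
  have h := T.orthogonal_ker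
  rw [hT.adjoint_eq, LinearMap.ker_eq_bot.mpr hinj, Submodule.bot_orthogonal_eq_top] at h
  change Dense ((LinearMap.range (T : E →ₗ[𝕜] E) : Set E))
  exact Submodule.dense_iff_topologicalClosure_eq_top.2 h.symm

theorem exists_supraposinormal_of_commute {A : E →L[𝕜] E} (hA : Function.Injective A)
    (hcomm : Commute (adjoint A ∘L A) (A ∘L adjoint A)) :
    ∃ Q P : E →L[𝕜] E, Q.IsPositive ∧ P.IsPositive ∧ DenseRange Q ∧
      A ∘L Q ∘L adjoint A = adjoint A ∘L P ∘L A := by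
  have hB : Function.Injective ((adjoint A ∘L A) ∘L A) := by
    rw [coe_comp, coe_comp]
    exact ((adjoint_comp_self_injective_iff A).2 hA).comp hA
  have hQ := isPositive_adjoint_comp_self ((adjoint A ∘L A) ∘L A)
  refine ⟨_, (A ∘L (A ∘L adjoint A)) ∘L adjoint (A ∘L (A ∘L adjoint A)), hQ,
    isPositive_self_comp_adjoint _, hQ.isSelfAdjoint.denseRange_of_injective
      (by rw [coe_comp]; exact (adjoint_comp_self_injective_iff _).2 hB), ?_⟩
  simp only [← star_eq_adjoint, ← mul_def, star_mul, star_star] at hcomm ⊢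
  calc A * (star A * (star A * A) * ((star A * A) * A)) * star A
      = (A * star A) * (star A * A) * ((star A * A) * (A * star A)) := by simp only [mul_assoc]
    -- both sides become `((A*A)(AA*))²`
    _ = (star A * A) * (A * star A) * ((A * star A) * (star A * A)) := by rw [← hcomm.eq]
    _ = star A * ((A * (A * star A)) * ((A * star A) * star A)) * A := by simp only [mul_assoc]

end Binormal

section WeightedShift

variable {𝕜 : Type*} [RCLike 𝕜]

structure IsWeightedShift (w : ℕ → 𝕜) (W : ℓ²(ℕ, 𝕜) →L[𝕜] ℓ²(ℕ, 𝕜)) : Prop where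
  apply_zero : ∀ f, W f 0 = 0
  apply_succ : ∀ f n, W f (n + 1) = w n * f n

namespace IsWeightedShift

variable {w : ℕ → 𝕜} {W : ℓ²(ℕ, 𝕜) →L[𝕜] ℓ²(ℕ, 𝕜)}

theorem apply_single (hW : IsWeightedShift w W) (n : ℕ) (a : 𝕜) :
    W (lp.single 2 n a) = lp.single 2 (n + 1) (w n * a) := by
  ext (_ | m)
  · simp [hW.apply_zero]
  · rcases eq_or_ne m n with rfl | hmn
    · simp [hW.apply_succ]
    · simp [hW.apply_succ, hmn]

theorem adjoint_apply (hW : IsWeightedShift w W) (g : ℓ²(ℕ, 𝕜)) (n : ℕ) :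
    adjoint W g n = starRingEnd 𝕜 (w n) * g (n + 1) := by
  calc adjoint W g n = inner 𝕜 (lp.single 2 n (1 : 𝕜)) (adjoint W g) := by
        simp [lp.inner_single_left]
    _ = inner 𝕜 (W (lp.single 2 n 1)) g := adjoint_inner_right _ _ _
    _ = starRingEnd 𝕜 (w n) * g (n + 1) := by
        simp [hW.apply_single, lp.inner_single_left, mul_comm]

theorem adjoint_apply_single_zero (hW : IsWeightedShift w W) (a : 𝕜) :
    adjoint W (lp.single 2 0 a) = 0 := by
  ext n
  simp [hW.adjoint_apply]

theorem adjoint_apply_single_succ (hW : IsWeightedShift w W) (n : ℕ) (a : 𝕜) :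
    adjoint W (lp.single 2 (n + 1) a) = lp.single 2 n (starRingEnd 𝕜 (w n) * a) := by
  ext m
  rcases eq_or_ne m n with rfl | hmn
  · simp [hW.adjoint_apply]
  · simp [hW.adjoint_apply, hmn]

theorem commute_adjoint_comp_self (hW : IsWeightedShift w W) :
    Commute (adjoint W ∘L W) (W ∘L adjoint W) := by
  ext f (_ | n)
  · simp [mul_def, hW.apply_zero, hW.adjoint_apply, hW.apply_succ _ 0]
  · simp only [mul_def, comp_apply, hW.adjoint_apply, hW.apply_succ]
    ring

theorem injective (hW : IsWeightedShift w W) (hw : ∀ n, w n ≠ 0) : Function.Injective W := by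
  refine (injective_iff_map_eq_zero W).2 fun f hf => ?_
  ext n
  simpa [hf, hW.apply_succ, hw n] using (hW.apply_succ f n).symm

theorem norm_sq_le_of_posinormal (hW : IsWeightedShift w W) {γ : ℝ}
    (h : ((γ : 𝕜) ^ 2 • (adjoint W ∘L W) - W ∘L adjoint W).IsPositive) (n : ℕ) :
    ‖w n‖ ^ 2 ≤ γ ^ 2 * ‖w (n + 1)‖ ^ 2 := by
  have := (show ((γ : 𝕜) ^ 2 • (adjoint W ∘L W) - adjoint (adjoint W) ∘L adjoint W).IsPositive
    by rwa [adjoint_adjoint]).norm_sq_le (lp.single 2 (n + 1) 1)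
  simpa [hW.apply_single, hW.adjoint_apply_single_succ, lp.norm_single] using this

theorem eq_zero_of_coposinormal (hW : IsWeightedShift w W) {γ : ℝ}
    (h : ((γ : 𝕜) ^ 2 • (W ∘L adjoint W) - adjoint W ∘L W).IsPositive) : w 0 = 0 := by
  have := (show ((γ : 𝕜) ^ 2 • (adjoint (adjoint W) ∘L adjoint W) - adjoint W ∘L W).IsPositive
    by rwa [adjoint_adjoint]).norm_sq_le (lp.single 2 0 1)
  simpa [hW.apply_single, hW.adjoint_apply_single_zero, lp.norm_single] using this

end IsWeightedShift

end WeightedShift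

/-- The weighted shift with w_{2n} = 1, w_{2n+1} = 1/(n+1) is neither posinormal
nor coposinormal, yet it is supraposinormal. -/
theorem shift_supraposinormal_not_posinormal_not_coposinormal
    (w : ℕ → ℂ)
    (hweven : ∀ n : ℕ, w (2 * n) = 1)
    (hwodd : ∀ n : ℕ, w (2 * n + 1) = 1 / ((n : ℂ) + 1))
    (W : lp (fun _ : ℕ => ℂ) 2 →L[ℂ] lp (fun _ : ℕ => ℂ) 2)
    (hW0 : ∀ f : lp (fun _ : ℕ => ℂ) 2, W f 0 = 0)
    (hWs : ∀ f : lp (fun _ : ℕ => ℂ) 2, ∀ n : ℕ, W f (n + 1) = w n * f n) :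
    (¬ ∃ γ : ℝ, 0 ≤ γ ∧
        (((γ : ℂ) ^ 2) • (adjoint W ∘L W) - W ∘L adjoint W).IsPositive) ∧
    (¬ ∃ γ : ℝ, 0 ≤ γ ∧
        (((γ : ℂ) ^ 2) • (W ∘L adjoint W) - adjoint W ∘L W).IsPositive) ∧
    (∃ Q P : lp (fun _ : ℕ => ℂ) 2 →L[ℂ] lp (fun _ : ℕ => ℂ) 2,
      Q.IsPositive ∧ P.IsPositive ∧ (DenseRange Q ∨ DenseRange P) ∧
      W ∘L Q ∘L adjoint W = adjoint W ∘L P ∘L W) := by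
  have hW : IsWeightedShift w W := ⟨hW0, hWs⟩
  have hw : ∀ n, w n ≠ 0 := by
    intro n
    obtain ⟨m, rfl | rfl⟩ := Nat.even_or_odd' n
    · simp [hweven]
    · simp [hwodd, Nat.cast_add_one_ne_zero]
  refine ⟨?_, ?_, ?_⟩
  · rintro ⟨γ, -, h⟩
    obtain ⟨m, hm⟩ := exists_nat_gt (γ ^ 2)
    have hle := hW.norm_sq_le_of_posinormal h (2 * m)
    rw [hweven, hwodd, norm_one, norm_div, norm_one, ← Nat.cast_add_one, Complex.norm_natCast,
      div_pow, one_pow, mul_one_div, one_le_div₀ (by positivity)] at hle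
    push_cast at hle
    nlinarith
  · rintro ⟨γ, -, h⟩
    exact hw 0 (hW.eq_zero_of_coposinormal h)
  · obtain ⟨Q, P, hQ, hP, hQdense, hWQ⟩ :=
      exists_supraposinormal_of_commute (hW.injective hw) hW.commute_adjoint_comp_self
    exact ⟨Q, P, hQ, hP, Or.inl hQdense, hWQ⟩
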